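/- arXiv:1710.07200 — 4 statements merged into one kernel-verified Lean document; each statement's English description precedes it below -/
import Mathlib

section
/- Let X be a Banach space with operators A and (B_n) and iterates x_n = B_{n-1}(x_n) for n ≥ 1. Suppose: each B_n is M_n-Lipschitz; A and each B_n are differentiable with K-Lipschitz and K_n-Lipschitz derivatives respectively on a convex set containing all iterates; ‖A(x_n) − B_n(x_n)‖ ≤ ε_n for all n; and ‖A'(x_{n-1}) − B'_{n-1}(x_{n-1})‖ ≤ σ_{n-1} for all n ≥ 1. Then for all n ≥ 1, r_n ≤ M_n r_n + (1/2)(K + K_{n-1}) r_{n-1}² + σ_{n-1} r_{n-1} + ε_{n-1} + ε_n, where r_k = ‖x_{k+1} − x_k‖. -/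
/-!
Since `x (n+2)` is a fixed point of `B (n+1)`, the step `x (n+2) - x (n+1)` splits into
`B (n+1) (x (n+2)) - B (n+1) (x (n+1))`, controlled by the Lipschitz constant of `B (n+1)`,
and the defect `B (n+1) (x (n+1)) - x (n+1)`. As `x (n+1)` is a fixed point of `B n`, the defect
is at most `ε (n+1) + ‖(A - B n) (x (n+1))‖`, and the first-order Taylor expansion of `A - B n`
about `x n`, whose derivative is `(K + K n)`-Lipschitz, bounds the latter by
`(K + K n)/2 r² + σ n r + ε n` with `r = ‖x (n+1) - x n‖`.
-/

open Set

section Taylor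

variable {E F : Type*} [NormedAddCommGroup E] [NormedSpace ℝ E]
  [NormedAddCommGroup F] [NormedSpace ℝ F]

theorem Convex.norm_image_sub_sub_fderiv_le_of_lipschitz {f : E → F} {f' : E → E →L[ℝ] F}
    {S : Set E} {K : ℝ} (hS : Convex ℝ S) (hf : ∀ z ∈ S, HasFDerivWithinAt f (f' z) S z)
    (hf' : ∀ z ∈ S, ∀ w ∈ S, ‖f' z - f' w‖ ≤ K * ‖z - w‖) {x y : E} (hx : x ∈ S) (hy : y ∈ S) :
    ‖f y - f x - f' x (y - x)‖ ≤ K / 2 * ‖y - x‖ ^ 2 := by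
  set γ : ℝ → E := fun t => x + t • (y - x)
  have hγS : ∀ t ∈ Icc (0 : ℝ) 1, γ t ∈ S := fun t ht =>
    hS.add_smul_sub_mem hx hy ht
  set g : ℝ → F := fun t => f (γ t) - f x - t • f' x (y - x)
  have hg : ∀ t ∈ Icc (0 : ℝ) 1,
      HasDerivWithinAt g ((f' (γ t) - f' x) (y - x)) (Icc 0 1) t := by
    intro t ht
    have hγ : HasDerivAt γ (y - x) t := by
      simpa only [one_smul] using ((hasDerivAt_id' t).smul_const (y - x)).const_add x
    have hfγ := (hf (γ t) (hγS t ht)).comp_hasDerivWithinAt t hγ.hasDerivWithinAt hγS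
    rw [sub_apply, ← one_smul ℝ (f' x (y - x))]
    exact (hfγ.sub_const (f x)).sub ((hasDerivAt_id' t).hasDerivWithinAt.smul_const _)
  have hbound : ∀ t ∈ Ico (0 : ℝ) 1,
      ‖(f' (γ t) - f' x) (y - x)‖ ≤ K * ‖y - x‖ ^ 2 * t := by
    intro t ht
    have hγx : γ t - x = t • (y - x) := add_sub_cancel_left _ _
    calc ‖(f' (γ t) - f' x) (y - x)‖ ≤ ‖f' (γ t) - f' x‖ * ‖y - x‖ :=
          ContinuousLinearMap.le_opNorm _ _
      _ ≤ K * ‖γ t - x‖ * ‖y - x‖ := by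
          gcongr
          exact hf' _ (hγS t (Ico_subset_Icc_self ht)) _ hx
      _ = K * ‖y - x‖ ^ 2 * t := by
          rw [hγx, norm_smul, Real.norm_of_nonneg ht.1]; ring
  have hB : ∀ t : ℝ, HasDerivAt (fun t => K / 2 * ‖y - x‖ ^ 2 * t ^ 2) (K * ‖y - x‖ ^ 2 * t) t :=
    fun t => ((hasDerivAt_pow 2 t).const_mul (K / 2 * ‖y - x‖ ^ 2)).congr_deriv (by ring)
  have key := image_norm_le_of_norm_deriv_right_le_deriv_boundary
    (fun t ht => (hg t ht).continuousWithinAt)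
    (fun t ht => (hg t (Ico_subset_Icc_self ht)).mono_of_mem_nhdsWithin
      (Icc_mem_nhdsGE_of_mem ht))
    (by simp [g, γ]) hB hbound (right_mem_Icc.2 zero_le_one)
  simpa [g, γ] using key

theorem Convex.norm_sub_image_le_of_lipschitz_fderiv {f g : E → F} {f' g' : E → E →L[ℝ] F}
    {S : Set E} {Kf Kg : ℝ} (hS : Convex ℝ S)
    (hf : ∀ z ∈ S, HasFDerivWithinAt f (f' z) S z) (hg : ∀ z ∈ S, HasFDerivWithinAt g (g' z) S z)
    (hf' : ∀ z ∈ S, ∀ w ∈ S, ‖f' z - f' w‖ ≤ Kf * ‖z - w‖)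
    (hg' : ∀ z ∈ S, ∀ w ∈ S, ‖g' z - g' w‖ ≤ Kg * ‖z - w‖) {x y : E} (hx : x ∈ S) (hy : y ∈ S) :
    ‖f y - g y‖ ≤ (Kf + Kg) / 2 * ‖y - x‖ ^ 2 + ‖f' x - g' x‖ * ‖y - x‖ + ‖f x - g x‖ := by
  have hfg' : ∀ z ∈ S, ∀ w ∈ S, ‖(f' - g') z - (f' - g') w‖ ≤ (Kf + Kg) * ‖z - w‖ := by
    intro z hz w hw
    calc ‖(f' - g') z - (f' - g') w‖ = ‖(f' z - f' w) - (g' z - g' w)‖ := by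
          simp only [Pi.sub_apply]; abel_nf
      _ ≤ ‖f' z - f' w‖ + ‖g' z - g' w‖ := norm_sub_le _ _
      _ ≤ (Kf + Kg) * ‖z - w‖ := by linarith [hf' z hz w hw, hg' z hz w hw]
  have htaylor := hS.norm_image_sub_sub_fderiv_le_of_lipschitz
    (fun z hz => (hf z hz).sub (hg z hz)) hfg' hx hy
  calc ‖f y - g y‖
      = ‖(f y - g y - (f x - g x) - (f' x - g' x) (y - x)) + (f' x - g' x) (y - x)
          + (f x - g x)‖ := by abel_nf
    _ ≤ ‖f y - g y - (f x - g x) - (f' x - g' x) (y - x)‖ + ‖(f' x - g' x) (y - x)‖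
          + ‖f x - g x‖ := norm_add₃_le
    _ ≤ (Kf + Kg) / 2 * ‖y - x‖ ^ 2 + ‖f' x - g' x‖ * ‖y - x‖ + ‖f x - g x‖ := by
        gcongr
        · exact htaylor
        · exact ContinuousLinearMap.le_opNorm _ _

end Taylor

theorem stmt_6_general {X : Type*} [NormedAddCommGroup X] [NormedSpace ℝ X]
    (A : X → X) (B : ℕ → X → X) (A' : X → X →L[ℝ] X) (B' : ℕ → X → X →L[ℝ] X)
    (x : ℕ → X) (S : Set X)
    (K : ℝ) (Mn Kn εn σn : ℕ → ℝ)
    (hS : Convex ℝ S) (hxS : ∀ n, x n ∈ S)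
    (hfix : ∀ n : ℕ, 1 ≤ n → x n = B (n - 1) (x n))
    (hBLip : ∀ n, ∀ x' ∈ S, ∀ y ∈ S, ‖B n x' - B n y‖ ≤ Mn n * ‖x' - y‖)
    (hA : ∀ x' ∈ S, HasFDerivWithinAt A (A' x') S x')
    (hB : ∀ n, ∀ x' ∈ S, HasFDerivWithinAt (B n) (B' n x') S x')
    (hA'Lip : ∀ x' ∈ S, ∀ y ∈ S, ‖A' x' - A' y‖ ≤ K * ‖x' - y‖)
    (hB'Lip : ∀ n, ∀ x' ∈ S, ∀ y ∈ S, ‖B' n x' - B' n y‖ ≤ Kn n * ‖x' - y‖)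
    (happrox : ∀ n, ‖A (x n) - B n (x n)‖ ≤ εn n)
    (hσ : ∀ n : ℕ, 1 ≤ n → ‖A' (x (n - 1)) - B' (n - 1) (x (n - 1))‖ ≤ σn (n - 1)) :
    ∀ n : ℕ, 1 ≤ n →
      ‖x (n + 1) - x n‖ ≤ Mn n * ‖x (n + 1) - x n‖
        + (1 / 2) * (K + Kn (n - 1)) * ‖x n - x (n - 1)‖ ^ 2
        + σn (n - 1) * ‖x n - x (n - 1)‖ + εn (n - 1) + εn n := by
  rintro n hn
  obtain ⟨m, rfl⟩ : ∃ m, n = m + 1 := ⟨n - 1, by omega⟩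
  simp only [Nat.add_sub_cancel]
  have hfix₁ : B m (x (m + 1)) = x (m + 1) := by simpa using (hfix (m + 1) (by omega)).symm
  have hfix₂ : B (m + 1) (x (m + 2)) = x (m + 2) := by simpa using (hfix (m + 2) (by omega)).symm
  have hσm : ‖A' (x m) - B' m (x m)‖ ≤ σn m := by simpa using hσ (m + 1) (by omega)
  have hdefect := hS.norm_sub_image_le_of_lipschitz_fderiv hA (hB m) hA'Lip (hB'Lip m)
    (hxS m) (hxS (m + 1))
  calc ‖x (m + 2) - x (m + 1)‖
      = ‖(B (m + 1) (x (m + 2)) - B (m + 1) (x (m + 1)))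
          + (B (m + 1) (x (m + 1)) - A (x (m + 1))) + (A (x (m + 1)) - B m (x (m + 1)))‖ := by
        rw [hfix₂, hfix₁]; abel_nf
    _ ≤ ‖B (m + 1) (x (m + 2)) - B (m + 1) (x (m + 1))‖
          + ‖B (m + 1) (x (m + 1)) - A (x (m + 1))‖ + ‖A (x (m + 1)) - B m (x (m + 1))‖ :=
        norm_add₃_le
    _ ≤ Mn (m + 1) * ‖x (m + 2) - x (m + 1)‖ + εn (m + 1)
          + ((K + Kn m) / 2 * ‖x (m + 1) - x m‖ ^ 2 + σn m * ‖x (m + 1) - x m‖ + εn m) := by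
        gcongr
        · exact hBLip (m + 1) _ (hxS (m + 2)) _ (hxS (m + 1))
        · exact (norm_sub_rev _ _).trans_le (happrox (m + 1))
        · exact hdefect.trans (by gcongr; exact happrox m)
    _ = _ := by ring

/-- Newton–Kantorovich type estimate with perturbations:
r_n ≤ M_n r_n + (1/2)(K + K_{n−1}) r_{n−1}² + σ_{n−1} r_{n−1} + ε_{n−1} + ε_n. -/
theorem stmt_6 {X : Type*} [NormedAddCommGroup X] [NormedSpace ℝ X] [CompleteSpace X]
    (A : X → X) (B : ℕ → X → X) (A' : X → X →L[ℝ] X) (B' : ℕ → X → X →L[ℝ] X)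
    (x : ℕ → X) (S : Set X)
    (K : ℝ) (Mn Kn εn σn : ℕ → ℝ)
    (hK : 0 ≤ K) (hMn : ∀ n, 0 ≤ Mn n) (hKn : ∀ n, 0 ≤ Kn n)
    (hεn : ∀ n, 0 ≤ εn n) (hσn : ∀ n, 0 ≤ σn n)
    (hS : Convex ℝ S) (hxS : ∀ n, x n ∈ S)
    (hfix : ∀ n : ℕ, 1 ≤ n → x n = B (n - 1) (x n))
    (hBLip : ∀ n, ∀ x' ∈ S, ∀ y ∈ S, ‖B n x' - B n y‖ ≤ Mn n * ‖x' - y‖)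
    (hA : ∀ x' ∈ S, HasFDerivWithinAt A (A' x') S x')
    (hB : ∀ n, ∀ x' ∈ S, HasFDerivWithinAt (B n) (B' n x') S x')
    (hA'Lip : ∀ x' ∈ S, ∀ y ∈ S, ‖A' x' - A' y‖ ≤ K * ‖x' - y‖)
    (hB'Lip : ∀ n, ∀ x' ∈ S, ∀ y ∈ S, ‖B' n x' - B' n y‖ ≤ Kn n * ‖x' - y‖)
    (happrox : ∀ n, ‖A (x n) - B n (x n)‖ ≤ εn n)
    (hσ : ∀ n : ℕ, 1 ≤ n → ‖A' (x (n - 1)) - B' (n - 1) (x (n - 1))‖ ≤ σn (n - 1)) :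
    ∀ n : ℕ, 1 ≤ n →
      ‖x (n + 1) - x n‖ ≤ Mn n * ‖x (n + 1) - x n‖
        + (1 / 2) * (K + Kn (n - 1)) * ‖x n - x (n - 1)‖ ^ 2
        + σn (n - 1) * ‖x n - x (n - 1)‖ + εn (n - 1) + εn n :=
  stmt_6_general A B A' B' x S K Mn Kn εn σn hS hxS hfix hBLip hA hB hA'Lip hB'Lip happrox hσ
end

section
/- Let X be a Banach space with operators A, (B_n), iterates x_n = B_{n-1}(x_n) for n ≥ 1, ‖A(x_0) − x_0‖ ≤ ε, ‖A(x_n) − B_n(x_n)‖ ≤ ε_n, each B_n being M_{n}-Lipschitz, A and B_n differentiable with K- and K_n-Lipschitz derivatives on a convex set containing all iterates, and ‖A'(x_0) − B'_{n-1}(x_0)‖ ≤ γ_{n-1}. Then for all n ≥ 1, with r̃_n = ‖x_n − x_0‖: r̃_n ≤ M_{n-1} r̃_n + (1/2)(K + K_{n-1}) r̃_{n-1}² + γ_{n-1} r̃_{n-1} + ε + ε_{n-1}. -/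
/-!
Since `x_n` is a fixed point of `B_{n-1}`, write `x_n - x_0 = B_{n-1} x_n - x_0` as the increment
of `B_{n-1}` from `x_0` to `x_n`, minus the second-order Taylor remainder of `B_{n-1}` at `x_0`
towards `x_{n-1}`, plus that of `A`, plus `(A' x_0 - B'_{n-1} x_0)(x_{n-1} - x_0)`, minus the defect
`A x_{n-1} - B_{n-1} x_{n-1}`, plus the residual `A x_0 - x_0`, and bound each term: the Taylor
remainders are quadratic because the derivatives are Lipschitz.
-/

open Set

section Taylor

variable {E F : Type*} [NormedAddCommGroup E] [NormedSpace ℝ E]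
  [NormedAddCommGroup F] [NormedSpace ℝ F]
  {f : E → F} {f' : E → E →L[ℝ] F} {s : Set E} {L : ℝ}

/- Along the segment `t ↦ a + t • (b - a)`, the remainder
`f (a + t • (b - a)) - f a - t • f' a (b - a)` has derivative of norm at most `L t ‖b - a‖²`,
which integrates to `L / 2 ‖b - a‖²`. -/
theorem Convex.norm_image_sub_sub_fderiv_le_of_lipschitz_s7 (hs : Convex ℝ s)
    (hf : ∀ z ∈ s, HasFDerivWithinAt f (f' z) s z)
    (hLip : ∀ u ∈ s, ∀ v ∈ s, ‖f' u - f' v‖ ≤ L * ‖u - v‖)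
    {a b : E} (ha : a ∈ s) (hb : b ∈ s) :
    ‖f b - f a - f' a (b - a)‖ ≤ L / 2 * ‖b - a‖ ^ 2 := by
  set v := b - a
  let c : ℝ → E := fun t => a + t • v
  have hc : ∀ t ∈ Icc (0 : ℝ) 1, c t ∈ s := fun t ht => hs.add_smul_sub_mem ha hb ht
  let g : ℝ → F := fun t => f (c t) - f a - t • f' a v
  let g' : ℝ → F := fun t => f' (c t) v - f' a v
  have hg : ∀ t ∈ Icc (0 : ℝ) 1, HasDerivWithinAt g (g' t) (Icc 0 1) t := by
    intro t ht
    have hc' : HasDerivWithinAt c v (Icc 0 1) t := by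
      simpa [c] using ((hasDerivWithinAt_id t (Icc (0 : ℝ) 1)).smul_const v).const_add a
    simpa [g, g', sub_sub, Pi.sub_def, Function.comp_def] using
      ((hf (c t) (hc t ht)).comp_hasDerivWithinAt t hc' hc).sub
        (((hasDerivWithinAt_id t (Icc (0 : ℝ) 1)).smul_const (f' a v)).const_add (f a))
  have hg' : ∀ t ∈ Ico (0 : ℝ) 1, ‖g' t‖ ≤ L * ‖v‖ ^ 2 * t := fun t ht =>
    calc ‖g' t‖ = ‖(f' (c t) - f' a) v‖ := by simp [g']
      _ ≤ ‖f' (c t) - f' a‖ * ‖v‖ := (f' (c t) - f' a).le_opNorm v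
      _ ≤ L * ‖c t - a‖ * ‖v‖ := by
          gcongr; exact hLip _ (hc t (Ico_subset_Icc_self ht)) a ha
      _ = L * ‖v‖ ^ 2 * t := by
          simp only [c, add_sub_cancel_left, norm_smul, Real.norm_eq_abs, abs_of_nonneg ht.1]
          ring
  have hbound : ∀ t : ℝ, HasDerivAt (fun t => L * ‖v‖ ^ 2 * t ^ 2 / 2) (L * ‖v‖ ^ 2 * t) t :=
    fun t => (((hasDerivAt_pow 2 t).const_mul _).div_const 2).congr_deriv (by ring)
  have key := image_norm_le_of_norm_deriv_right_le_deriv_boundary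
    (fun t ht => (hg t ht).continuousWithinAt)
    (fun t ht => (hg t (Ico_subset_Icc_self ht)).mono_of_mem_nhdsWithin (Icc_mem_nhdsGE_of_mem ht))
    (by simp [g, c]) hbound hg' (right_mem_Icc.2 zero_le_one)
  calc ‖f b - f a - f' a v‖ = ‖g 1‖ := by simp [g, c, v]
    _ ≤ L * ‖v‖ ^ 2 * 1 ^ 2 / 2 := key
    _ = L / 2 * ‖v‖ ^ 2 := by ring

end Taylor

section FixedPoint

variable {E : Type*} [NormedAddCommGroup E] [NormedSpace ℝ E]
  {A B : E → E} {A' B' : E → E →L[ℝ] E} {s : Set E} {K L M : ℝ}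

theorem norm_sub_le_of_isFixedPt (hs : Convex ℝ s)
    (hA : ∀ z ∈ s, HasFDerivWithinAt A (A' z) s z)
    (hB : ∀ z ∈ s, HasFDerivWithinAt B (B' z) s z)
    (hA'Lip : ∀ u ∈ s, ∀ v ∈ s, ‖A' u - A' v‖ ≤ K * ‖u - v‖)
    (hB'Lip : ∀ u ∈ s, ∀ v ∈ s, ‖B' u - B' v‖ ≤ L * ‖u - v‖)
    (hBLip : ∀ u ∈ s, ∀ v ∈ s, ‖B u - B v‖ ≤ M * ‖u - v‖)
    {x₀ y z : E} (hx₀ : x₀ ∈ s) (hy : y ∈ s) (hz : z ∈ s) (hfix : Function.IsFixedPt B z) :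
    ‖z - x₀‖ ≤ M * ‖z - x₀‖ + 1 / 2 * (K + L) * ‖y - x₀‖ ^ 2
      + ‖A' x₀ - B' x₀‖ * ‖y - x₀‖ + ‖A x₀ - x₀‖ + ‖A y - B y‖ := by
  have decomp : z - x₀ = (B z - B x₀) - (B y - B x₀ - B' x₀ (y - x₀))
      + (A y - A x₀ - A' x₀ (y - x₀)) + (A' x₀ - B' x₀) (y - x₀) - (A y - B y) + (A x₀ - x₀) := by
    rw [sub_apply]
    nth_rewrite 1 [← hfix]
    abel
  have triangle : ‖z - x₀‖ ≤ ‖B z - B x₀‖ + ‖B y - B x₀ - B' x₀ (y - x₀)‖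
      + ‖A y - A x₀ - A' x₀ (y - x₀)‖ + ‖(A' x₀ - B' x₀) (y - x₀)‖ + ‖A y - B y‖
      + ‖A x₀ - x₀‖ := by
    rw [decomp]
    refine (norm_add_le _ _).trans (add_le_add_left ?_ _)
    refine (norm_sub_le _ _).trans (add_le_add_left ?_ _)
    refine (norm_add_le _ _).trans (add_le_add_left ?_ _)
    refine (norm_add_le _ _).trans (add_le_add_left ?_ _)
    exact norm_sub_le _ _
  have hBz := hBLip z hz x₀ hx₀
  have hBy := hs.norm_image_sub_sub_fderiv_le_of_lipschitz_s7 hB hB'Lip hx₀ hy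
  have hAy := hs.norm_image_sub_sub_fderiv_le_of_lipschitz_s7 hA hA'Lip hx₀ hy
  have hgap := (A' x₀ - B' x₀).le_opNorm (y - x₀)
  linarith

end FixedPoint

theorem stmt_7_general {X : Type*} [NormedAddCommGroup X] [NormedSpace ℝ X]
    (A : X → X) (B : ℕ → X → X) (A' : X → X →L[ℝ] X) (B' : ℕ → X → X →L[ℝ] X)
    (x : ℕ → X) (S : Set X)
    (K ε : ℝ) (Mn Kn εn γn : ℕ → ℝ)
    (hS : Convex ℝ S) (hxS : ∀ n, x n ∈ S)
    (hfix : ∀ n : ℕ, 1 ≤ n → x n = B (n - 1) (x n))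
    (hx0 : ‖A (x 0) - x 0‖ ≤ ε)
    (happrox : ∀ n, ‖A (x n) - B n (x n)‖ ≤ εn n)
    (hBLip : ∀ n, ∀ x' ∈ S, ∀ y ∈ S, ‖B n x' - B n y‖ ≤ Mn n * ‖x' - y‖)
    (hA : ∀ x' ∈ S, HasFDerivWithinAt A (A' x') S x')
    (hB : ∀ n, ∀ x' ∈ S, HasFDerivWithinAt (B n) (B' n x') S x')
    (hA'Lip : ∀ x' ∈ S, ∀ y ∈ S, ‖A' x' - A' y‖ ≤ K * ‖x' - y‖)
    (hB'Lip : ∀ n, ∀ x' ∈ S, ∀ y ∈ S, ‖B' n x' - B' n y‖ ≤ Kn n * ‖x' - y‖)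
    (hγ : ∀ n : ℕ, 1 ≤ n → ‖A' (x 0) - B' (n - 1) (x 0)‖ ≤ γn (n - 1)) :
    ∀ n : ℕ, 1 ≤ n →
      ‖x n - x 0‖ ≤ Mn (n - 1) * ‖x n - x 0‖
        + (1 / 2) * (K + Kn (n - 1)) * ‖x (n - 1) - x 0‖ ^ 2
        + γn (n - 1) * ‖x (n - 1) - x 0‖ + ε + εn (n - 1) := by
  intro n hn
  obtain ⟨m, rfl⟩ : ∃ m, n = m + 1 := ⟨n - 1, by omega⟩
  have hfixm : Function.IsFixedPt (B m) (x (m + 1)) := (hfix (m + 1) le_add_self).symm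
  have hγm : ‖A' (x 0) - B' m (x 0)‖ ≤ γn m := hγ (m + 1) le_add_self
  have key := norm_sub_le_of_isFixedPt hS hA (hB m) hA'Lip (hB'Lip m) (hBLip m)
    (hxS 0) (hxS m) (hxS (m + 1)) hfixm
  have hgap := mul_le_mul_of_nonneg_right hγm (norm_nonneg (x m - x 0))
  simp only [Nat.add_sub_cancel]
  linarith [happrox m]

/-- Modified Newton–Kantorovich estimate:
r̃_n ≤ M_{n−1} r̃_n + (1/2)(K + K_{n−1}) r̃_{n−1}² + γ_{n−1} r̃_{n−1} + ε + ε_{n−1}. -/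
theorem stmt_7 {X : Type*} [NormedAddCommGroup X] [NormedSpace ℝ X] [CompleteSpace X]
    (A : X → X) (B : ℕ → X → X) (A' : X → X →L[ℝ] X) (B' : ℕ → X → X →L[ℝ] X)
    (x : ℕ → X) (S : Set X)
    (K ε : ℝ) (Mn Kn εn γn : ℕ → ℝ)
    (hK : 0 ≤ K) (hε : 0 ≤ ε) (hMn : ∀ n, 0 ≤ Mn n) (hKn : ∀ n, 0 ≤ Kn n)
    (hεn : ∀ n, 0 ≤ εn n) (hγn : ∀ n, 0 ≤ γn n)
    (hS : Convex ℝ S) (hxS : ∀ n, x n ∈ S)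
    (hfix : ∀ n : ℕ, 1 ≤ n → x n = B (n - 1) (x n))
    (hx0 : ‖A (x 0) - x 0‖ ≤ ε)
    (happrox : ∀ n, ‖A (x n) - B n (x n)‖ ≤ εn n)
    (hBLip : ∀ n, ∀ x' ∈ S, ∀ y ∈ S, ‖B n x' - B n y‖ ≤ Mn n * ‖x' - y‖)
    (hA : ∀ x' ∈ S, HasFDerivWithinAt A (A' x') S x')
    (hB : ∀ n, ∀ x' ∈ S, HasFDerivWithinAt (B n) (B' n x') S x')
    (hA'Lip : ∀ x' ∈ S, ∀ y ∈ S, ‖A' x' - A' y‖ ≤ K * ‖x' - y‖)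
    (hB'Lip : ∀ n, ∀ x' ∈ S, ∀ y ∈ S, ‖B' n x' - B' n y‖ ≤ Kn n * ‖x' - y‖)
    (hγ : ∀ n : ℕ, 1 ≤ n → ‖A' (x 0) - B' (n - 1) (x 0)‖ ≤ γn (n - 1)) :
    ∀ n : ℕ, 1 ≤ n →
      ‖x n - x 0‖ ≤ Mn (n - 1) * ‖x n - x 0‖
        + (1 / 2) * (K + Kn (n - 1)) * ‖x (n - 1) - x 0‖ ^ 2
        + γn (n - 1) * ‖x (n - 1) - x 0‖ + ε + εn (n - 1) :=
  stmt_7_general A B A' B' x S K ε Mn Kn εn γn hS hxS hfix hx0 happrox hBLip hA hB hA'Lip hB'Lip hγ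
end

section
/- Suppose ∑_{n} ε_n < ∞, there exists M* < 1 with M_n ≤ M* for all n, and q = (M + M*)/(1 − M*) < 1. If a nonnegative sequence (r_n) satisfies (1 − M_n) r_n ≤ (M + M_{n-1}) r_{n-1} + ε_{n-1} + ε_n for all n ≥ 1, then ∑_n r_n < ∞. -/
/-!
Summing the recursion over `1 ≤ n ≤ N` and bounding `M_n` by `M*` gives
`(1 - M*) (S_N - r_0) ≤ (M + M*) S_N + 2 ∑ ε`, where `S_N` is a partial sum of `r`.
Since `M + M* < 1 - M*`, the partial sums are bounded, and a nonnegative series with bounded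
partial sums converges.
-/

open Finset

lemma summable_of_mul_sum_succ_le {r : ℕ → ℝ} (hr : ∀ n, 0 ≤ r n) {a b C : ℝ}
    (ha : 0 < a) (hba : b < a)
    (h : ∀ N, a * ∑ k ∈ range N, r (k + 1) ≤ b * ∑ k ∈ range N, r k + C) :
    Summable r := by
  have hC : 0 ≤ C := by simpa using h 0
  have hδ : 0 < a - max b 0 := sub_pos.2 (max_lt hba ha)
  have hmono : ∀ N, ∑ k ∈ range N, r k ≤ ∑ k ∈ range (N + 1), r k := fun N =>
    sum_le_sum_of_subset_of_nonneg (range_subset_range.2 N.le_succ) fun k _ _ => hr k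
  have hsucc : ∀ N, ∑ k ∈ range (N + 1), r k ≤ (a * r 0 + C) / (a - max b 0) := by
    intro N
    have hshift : ∑ k ∈ range (N + 1), r k = ∑ k ∈ range N, r (k + 1) + r 0 :=
      sum_range_succ' r N
    have hpos : 0 ≤ ∑ k ∈ range N, r k := sum_nonneg fun k _ => hr k
    have hb : b * ∑ k ∈ range N, r k ≤ max b 0 * ∑ k ∈ range (N + 1), r k :=
      (mul_le_mul_of_nonneg_right (le_max_left b 0) hpos).trans
        (mul_le_mul_of_nonneg_left (hmono N) (le_max_right b 0))
    rw [le_div_iff₀ hδ]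
    nlinarith [h N]
  exact summable_of_sum_range_le hr fun N => (hmono N).trans (hsucc N)

lemma sum_range_add_succ_le_two_mul_tsum {ε : ℕ → ℝ} (hε0 : ∀ n, 0 ≤ ε n) (hε : Summable ε)
    (N : ℕ) : ∑ k ∈ range N, (ε k + ε (k + 1)) ≤ 2 * ∑' n, ε n := by
  have hle : ∀ n, ∑ k ∈ range n, ε k ≤ ∑' n, ε n :=
    fun n => hε.sum_le_tsum _ fun k _ => hε0 k
  have hshift : ∑ k ∈ range (N + 1), ε k = ∑ k ∈ range N, ε (k + 1) + ε 0 :=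
    sum_range_succ' ε N
  rw [sum_add_distrib]
  linarith [hle N, hle (N + 1), hε0 0]

theorem stmt_8_general (r εn Mn : ℕ → ℝ) (M Mstar : ℝ)
    (hr : ∀ n, 0 ≤ r n) (hεn : ∀ n, 0 ≤ εn n)
    (hε : Summable εn)
    (hMstar : Mstar < 1) (hMnle : ∀ n, Mn n ≤ Mstar)
    (hq : (M + Mstar) / (1 - Mstar) < 1)
    (hrec : ∀ n : ℕ, 1 ≤ n →
      (1 - Mn n) * r n ≤ (M + Mn (n - 1)) * r (n - 1) + εn (n - 1) + εn n) :
    Summable r := by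
  have ha : 0 < 1 - Mstar := sub_pos.2 hMstar
  refine summable_of_mul_sum_succ_le hr ha ((div_lt_one ha).1 hq)
    (C := 2 * ∑' n, εn n) fun N => ?_
  calc (1 - Mstar) * ∑ k ∈ range N, r (k + 1)
      ≤ ∑ k ∈ range N, (1 - Mn (k + 1)) * r (k + 1) := by
        rw [mul_sum]
        exact sum_le_sum fun k _ =>
          mul_le_mul_of_nonneg_right (by linarith [hMnle (k + 1)]) (hr (k + 1))
    _ ≤ ∑ k ∈ range N, ((M + Mstar) * r k + (εn k + εn (k + 1))) := by
        refine sum_le_sum fun k _ => ?_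
        have hk := hrec (k + 1) k.succ_pos
        simp only [Nat.add_sub_cancel] at hk
        nlinarith [hMnle k, hr k]
    _ = (M + Mstar) * ∑ k ∈ range N, r k + ∑ k ∈ range N, (εn k + εn (k + 1)) := by
        rw [sum_add_distrib, mul_sum]
    _ ≤ (M + Mstar) * ∑ k ∈ range N, r k + 2 * ∑' n, εn n := by
        gcongr
        exact sum_range_add_succ_le_two_mul_tsum hεn hε N

/-- Summability of increments under the contraction hypothesis. -/
theorem stmt_8 (r εn Mn : ℕ → ℝ) (M Mstar : ℝ)
    (hr : ∀ n, 0 ≤ r n) (hεn : ∀ n, 0 ≤ εn n) (hMn : ∀ n, 0 ≤ Mn n) (hM : 0 ≤ M)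
    (hε : Summable εn)
    (hMstar : Mstar < 1) (hMnle : ∀ n, Mn n ≤ Mstar)
    (hq : (M + Mstar) / (1 - Mstar) < 1)
    (hrec : ∀ n : ℕ, 1 ≤ n →
      (1 - Mn n) * r n ≤ (M + Mn (n - 1)) * r (n - 1) + εn (n - 1) + εn n) :
    Summable r :=
  stmt_8_general r εn Mn M Mstar hr hεn hε hMstar hMnle hq hrec
end

section
/- Let r_0 ≥ 0, η ≥ 0, and sequences λ_n ∈ [0, λ] with λ < 1 and ρ_n ≥ 0, and define r_n recursively by r_n = η r_{n-1}² + λ_{n-1} r_{n-1} + ρ_{n-1} for n ≥ 1. Suppose for all n ≥ 1, 4ηρ_{n-1} < (1 − λ_{n-1})², and there exists C ≥ r_0 with sup_n (1 − λ_{n-1} − √((1 − λ_{n-1})² − 4ηρ_{n-1}))/(2η) ≤ C ≤ inf_n (1 − λ_{n-1} + √((1 − λ_{n-1})² − 4ηρ_{n-1}))/(2η). Then r_{n-1} ≤ C for all n ≥ 1. -/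
/-!
Since `C` lies between the two roots of `η x² - (1 - λₙ) x + ρₙ`, the step map
`x ↦ η x² + λₙ x + ρₙ` maps `C` to a value `≤ C`. For `η, λₙ, ρₙ ≥ 0` this map is monotone and
nonnegative on `[0, ∞)`, so it maps `[0, C]` into itself, and `r₀ ∈ [0, C]` stays there.
-/

open Real

lemma quadratic_nonpos_of_mem_roots {a b c x : ℝ} (ha : 0 < a) (hd : 0 ≤ b ^ 2 - 4 * a * c)
    (hlow : (b - √(b ^ 2 - 4 * a * c)) / (2 * a) ≤ x)
    (hhigh : x ≤ (b + √(b ^ 2 - 4 * a * c)) / (2 * a)) :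
    a * x ^ 2 - b * x + c ≤ 0 := by
  set s := √(b ^ 2 - 4 * a * c)
  have hs : s ^ 2 = b ^ 2 - 4 * a * c := sq_sqrt hd
  have h2a : 0 < 2 * a := by positivity
  rw [div_le_iff₀ h2a] at hlow
  rw [le_div_iff₀ h2a] at hhigh
  have factor : 4 * a * (a * x ^ 2 - b * x + c) = (2 * a * x - (b - s)) * (2 * a * x - (b + s)) := by
    linear_combination hs
  have : 4 * a * (a * x ^ 2 - b * x + c) ≤ 0 :=
    factor ▸ mul_nonpos_of_nonneg_of_nonpos (by linarith) (by linarith)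
  exact nonpos_of_mul_nonpos_right this (by positivity)

lemma quadratic_step_le {η l ρ x C : ℝ} (hη : 0 ≤ η) (hl : 0 ≤ l) (hx : 0 ≤ x) (hxC : x ≤ C)
    (hC : η * C ^ 2 - (1 - l) * C + ρ ≤ 0) :
    η * x ^ 2 + l * x + ρ ≤ C := by
  have : η * x ^ 2 + l * x ≤ η * C ^ 2 + l * C := by gcongr
  linarith

lemma perturbed_quadratic_mem_Icc (r lam ρ : ℕ → ℝ) {η C : ℝ} (hη : 0 ≤ η)
    (hlam : ∀ n, 0 ≤ lam n) (hρ : ∀ n, 0 ≤ ρ n)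
    (hrec : ∀ n, r (n + 1) = η * r n ^ 2 + lam n * r n + ρ n)
    (hC : ∀ n, η * C ^ 2 - (1 - lam n) * C + ρ n ≤ 0) (hr0 : r 0 ∈ Set.Icc 0 C) :
    ∀ n, r n ∈ Set.Icc 0 C
  | 0 => hr0
  | n + 1 => by
    obtain ⟨hr, hrC⟩ := perturbed_quadratic_mem_Icc r lam ρ hη hlam hρ hrec hC hr0 n
    have := hlam n
    have := hρ n
    rw [hrec n]
    exact ⟨by positivity, quadratic_step_le hη (hlam n) hr hrC (hC n)⟩

theorem stmt_9_general (r lam ρ : ℕ → ℝ) (η lamBar C : ℝ)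
    (hr0 : 0 ≤ r 0) (hη : 0 < η)
    (hlam : ∀ n, 0 ≤ lam n ∧ lam n ≤ lamBar)
    (hρ : ∀ n, 0 ≤ ρ n)
    (hrec : ∀ n : ℕ, 1 ≤ n → r n = η * r (n - 1) ^ 2 + lam (n - 1) * r (n - 1) + ρ (n - 1))
    (hdisc : ∀ n : ℕ, 1 ≤ n → 4 * η * ρ (n - 1) < (1 - lam (n - 1)) ^ 2)
    (hCr0 : r 0 ≤ C)
    (hClow : ∀ n : ℕ, 1 ≤ n →
      (1 - lam (n - 1) - Real.sqrt ((1 - lam (n - 1)) ^ 2 - 4 * η * ρ (n - 1))) / (2 * η) ≤ C)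
    (hChigh : ∀ n : ℕ, 1 ≤ n →
      C ≤ (1 - lam (n - 1) + Real.sqrt ((1 - lam (n - 1)) ^ 2 - 4 * η * ρ (n - 1))) / (2 * η)) :
    ∀ n : ℕ, 1 ≤ n → r (n - 1) ≤ C := by
  have hC : ∀ n, η * C ^ 2 - (1 - lam n) * C + ρ n ≤ 0 := fun n =>
    quadratic_nonpos_of_mem_roots hη (sub_nonneg.2 (hdisc (n + 1) le_add_self).le)
      (hClow (n + 1) le_add_self) (hChigh (n + 1) le_add_self)
  have hinv := perturbed_quadratic_mem_Icc r lam ρ hη.le (fun n => (hlam n).1) hρ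
    (fun n => hrec (n + 1) le_add_self) hC ⟨hr0, hCr0⟩
  exact fun n _ => (hinv (n - 1)).2

/-- Uniform bound C on the perturbed quadratic recursion (Assertion 2, part 1). -/
theorem stmt_9 (r lam ρ : ℕ → ℝ) (η lamBar C : ℝ)
    (hr0 : 0 ≤ r 0) (hη : 0 < η)
    (hlam : ∀ n, 0 ≤ lam n ∧ lam n ≤ lamBar) (hlamBar : lamBar < 1)
    (hρ : ∀ n, 0 ≤ ρ n)
    (hrec : ∀ n : ℕ, 1 ≤ n → r n = η * r (n - 1) ^ 2 + lam (n - 1) * r (n - 1) + ρ (n - 1))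
    (hdisc : ∀ n : ℕ, 1 ≤ n → 4 * η * ρ (n - 1) < (1 - lam (n - 1)) ^ 2)
    (hCr0 : r 0 ≤ C)
    (hClow : ∀ n : ℕ, 1 ≤ n →
      (1 - lam (n - 1) - Real.sqrt ((1 - lam (n - 1)) ^ 2 - 4 * η * ρ (n - 1))) / (2 * η) ≤ C)
    (hChigh : ∀ n : ℕ, 1 ≤ n →
      C ≤ (1 - lam (n - 1) + Real.sqrt ((1 - lam (n - 1)) ^ 2 - 4 * η * ρ (n - 1))) / (2 * η)) :
    ∀ n : ℕ, 1 ≤ n → r (n - 1) ≤ C :=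
  stmt_9_general r lam ρ η lamBar C hr0 hη hlam hρ hrec hdisc hCr0 hClow hChigh
end
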